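/- Claim (L² lower bound for the averaged pullback under a quasi-isometry): Let Φ : Γ → Γ̂ be a quasi-isometry with constants ε, a, b, C_q between connected weighted graphs with controlled and uniformly lazy weights. Then there exists a constant C_B > 0, depending only on ε and the quasi-isometry and weight constants, such that for every z ∈ Γ̂, every r ≥ 1, and every non-negative function f : Γ̂ → ℝ supported in B̂(z, r): ∑_{α ∈ Γ} |f_ε(Φ(α))|² π(α) ≥ C_B ∑_{x ∈ Γ̂} |f(x)|² π̂(x). -/

import Mathlib

open scoped BigOperators

/-- Sum of a real-valued function over a set of vertices. -/
noncomputable def setSum {V : Type*} (A : Set V) (f : V → ℝ) : ℝ := ∑' y : A, f (y : V)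

open Classical in
/-- The Markov kernel attached to vertex weights `pw` and edge weights `ew`. -/
noncomputable def mkernel {V : Type*} (pw : V → ℝ) (ew : V → V → ℝ) (x y : V) : ℝ :=
  if x = y then 1 - (∑' z, ew x z) / pw x else ew x y / pw x

open Classical in
/-- Iterates (convolution powers) of the Markov kernel. -/
noncomputable def mkernelPow {V : Type*} (pw : V → ℝ) (ew : V → V → ℝ) : ℕ → V → V → ℝ
  | 0 => fun x y => if x = y then 1 else 0
  | n + 1 => fun x y => ∑' z, mkernel pw ew x z * mkernelPow pw ew n z y

/-- The heat kernel (transition density) of the random walk. -/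
noncomputable def mheat {V : Type*} (pw : V → ℝ) (ew : V → V → ℝ) (n : ℕ) (x y : V) : ℝ :=
  mkernelPow pw ew n x y / pw y

/-- A weighted graph: a simple connected graph with symmetric, adapted edge weights
subordinate to positive vertex weights. -/
structure WeightedGraph (V : Type*) where
  G : SimpleGraph V
  wV : V → ℝ
  wE : V → V → ℝ
  wV_pos : ∀ x, 0 < wV x
  wE_nonneg : ∀ x y, 0 ≤ wE x y
  wE_symm : ∀ x y, wE x y = wE y x
  adapted : ∀ x y, 0 < wE x y ↔ G.Adj x y
  connected : G.Connected
  wE_summable : ∀ x, Summable fun y => wE x y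
  subordinate : ∀ x, (∑' y, wE x y) ≤ wV x

namespace WeightedGraph

variable {V : Type*}

/-- Controlled weights with constant `Cc`. -/
def Controlled (Γ : WeightedGraph V) (Cc : ℝ) : Prop :=
  1 < Cc ∧ ∀ x y, Γ.G.Adj x y → Γ.wV x ≤ Cc * Γ.wE x y

/-- Uniformly lazy weights with constant `Ce`. -/
def UniformlyLazy (Γ : WeightedGraph V) (Ce : ℝ) : Prop :=
  Ce ∈ Set.Ioo (0 : ℝ) 1 ∧ ∀ x, (∑' y, Γ.wE x y) ≤ (1 - Ce) * Γ.wV x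

/-- Closed ball for the graph distance. -/
noncomputable def ball (Γ : WeightedGraph V) (x : V) (r : ℝ) : Set V :=
  {y | (Γ.G.dist x y : ℝ) ≤ r}

/-- Volume of a ball. -/
noncomputable def vol (Γ : WeightedGraph V) (x : V) (r : ℝ) : ℝ :=
  setSum (Γ.ball x r) Γ.wV

/-- Dirichlet energy of a function. -/
noncomputable def energy (Γ : WeightedGraph V) (f : V → ℝ) : ℝ :=
  (∑' x, ∑' y, (f x - f y) ^ 2 * Γ.wE x y) / 2

/-- Squared `L²`-norm of a function. -/
noncomputable def sqnorm (Γ : WeightedGraph V) (f : V → ℝ) : ℝ :=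
  ∑' x, f x ^ 2 * Γ.wV x

/-- The first Dirichlet eigenvalue of a finite set `Ω`. -/
noncomputable def lambda1 (Γ : WeightedGraph V) (Ω : Finset V) : ℝ :=
  sInf {q | ∃ f : V → ℝ, f ≠ 0 ∧ (∀ x, f x ≠ 0 → x ∈ Ω) ∧ q = Γ.energy f / Γ.sqnorm f}

/-- `Λ` is a relative Faber-Krahn function of `Γ`: for balls `B(z,r)` the map
`ν ↦ Λ z r ν` is non-increasing, and `λ₁(Ω) ≥ Λ(B, π(Ω))` for nonempty finite `Ω ⊆ B`. -/
def IsRelFK (Γ : WeightedGraph V) (Λ : V → ℝ → ℝ → ℝ) : Prop :=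
  (∀ z r ν₁ ν₂, 0 < ν₁ → ν₁ ≤ ν₂ → Λ z r ν₂ ≤ Λ z r ν₁) ∧
  ∀ z : V, ∀ r : ℝ, ∀ Ω : Finset V, Ω.Nonempty → (∀ x ∈ Ω, x ∈ Γ.ball z r) →
    Λ z r (∑ x ∈ Ω, Γ.wV x) ≤ Γ.lambda1 Ω

/-- The heat kernel of the weighted graph. -/
noncomputable def heatKernel (Γ : WeightedGraph V) : ℕ → V → V → ℝ :=
  mheat Γ.wV Γ.wE

/-- `ε`-average of a function over closed balls of radius `ε`. -/
noncomputable def avg (Γ : WeightedGraph V) (ε : ℝ) (f : V → ℝ) (x : V) : ℝ :=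
  setSum (Γ.ball x ε) (fun y => f y * Γ.wV y) / Γ.vol x ε

/-- `Φ` is a quasi-isometry between weighted graphs with constants `ε, a, b, Cq`. -/
structure IsQI {V₁ V₂ : Type*} (Γ₁ : WeightedGraph V₁) (Γ₂ : WeightedGraph V₂)
    (Φ : V₁ → V₂) (ε a b Cq : ℝ) : Prop where
  eps_pos : 0 < ε
  a_pos : 0 < a
  b_nonneg : 0 ≤ b
  Cq_pos : 0 < Cq
  dense : ∀ z : V₂, ∃ x : V₁, (Γ₂.G.dist (Φ x) z : ℝ) ≤ ε
  dist_lower : ∀ x y : V₁, a⁻¹ * (Γ₁.G.dist x y : ℝ) - b ≤ (Γ₂.G.dist (Φ x) (Φ y) : ℝ)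
  dist_upper : ∀ x y : V₁, (Γ₂.G.dist (Φ x) (Φ y) : ℝ) ≤ a * (Γ₁.G.dist x y : ℝ)
  weight_lower : ∀ x, Cq⁻¹ * Γ₁.wV x ≤ Γ₂.wV (Φ x)
  weight_upper : ∀ x, Γ₂.wV (Φ x) ≤ Cq * Γ₁.wV x

end WeightedGraph

/-!
Every vertex `x` of `Γ₂` lies within `ε` of a point `Φ (α x)` of the image. The `ε`-average at
`Φ (α x)` is at least `f x π₂(x) / V₂(Φ (α x), ε)`, and with controlled weights an `ε`-ball has
boundedly many vertices, all of weight comparable to its centre; together with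
`π₂ ∘ Φ ≤ Cq π₁` this gives `f(x)² π₂(x) ≤ C f_ε(Φ (α x))² π₁(α x)`. Summing over `x`, each fibre
of `α` lies in an `ε`-ball, hence has boundedly many points. The lower quasi-isometry bound
confines the support of `f_ε ∘ Φ` to a ball of `Γ₁`, which is finite, so the left-hand side is a
genuine (summable) sum.
-/

section SetSum

variable {V : Type*} {A : Set V} {f : V → ℝ}

lemma setSum_eq_sum (hA : A.Finite) : setSum A f = ∑ y ∈ hA.toFinset, f y := by
  rw [← Finset.tsum_subtype', hA.coe_toFinset]
  rfl

lemma setSum_nonneg (hf : ∀ y, 0 ≤ f y) : 0 ≤ setSum A f :=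
  tsum_nonneg fun y => hf y

lemma le_setSum (hA : A.Finite) (hf : ∀ y, 0 ≤ f y) {y : V} (hy : y ∈ A) :
    f y ≤ setSum A f := by
  have := hA.to_subtype
  exact Summable.le_tsum (f := fun y : A => f y) Summable.of_finite ⟨y, hy⟩ fun z _ => hf z

lemma setSum_le_sum_of_subset {s : Finset V} (hAs : A ⊆ s) (hf : ∀ y, 0 ≤ f y) :
    setSum A f ≤ ∑ y ∈ s, f y := by
  rw [setSum_eq_sum (s.finite_toSet.subset hAs)]
  exact Finset.sum_le_sum_of_subset_of_nonneg (by simpa using hAs) fun y _ _ => hf y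

lemma exists_ne_zero_of_setSum_ne_zero (h : setSum A f ≠ 0) : ∃ y ∈ A, f y ≠ 0 := by
  by_contra! h0
  exact h (by simp [setSum, h0 _ (Subtype.property _)])

end SetSum

lemma sum_comp_le_mul_tsum {ι κ : Type*} [DecidableEq κ] (s : Finset ι) (α : ι → κ)
    {g : κ → ℝ} (hg : ∀ β, 0 ≤ g β) (hsum : Summable g) {N : ℝ} (hN0 : 0 ≤ N)
    (hN : ∀ β, (({x ∈ s | α x = β} : Finset ι).card : ℝ) ≤ N) :
    ∑ x ∈ s, g (α x) ≤ N * ∑' β, g β := by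
  rw [Finset.sum_comp]
  calc ∑ β ∈ s.image α, ({x ∈ s | α x = β} : Finset ι).card • g β
      ≤ ∑ β ∈ s.image α, N * g β :=
        Finset.sum_le_sum fun β _ => by
          rw [nsmul_eq_mul]; exact mul_le_mul_of_nonneg_right (hN β) (hg β)
    _ = N * ∑ β ∈ s.image α, g β := (Finset.mul_sum _ _ _).symm
    _ ≤ N * ∑' β, g β := mul_le_mul_of_nonneg_left (hsum.sum_le_tsum _ fun β _ => hg β) hN0

namespace WeightedGraph

variable {V : Type*} {Γ : WeightedGraph V} {f : V → ℝ} {x y : V} {r : ℝ}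

lemma mem_ball_comm : y ∈ Γ.ball x r ↔ x ∈ Γ.ball y r := by
  show (Γ.G.dist x y : ℝ) ≤ r ↔ (Γ.G.dist y x : ℝ) ≤ r
  rw [SimpleGraph.dist_comm]

lemma mem_ball_add {w : V} {s : ℝ} (hy : y ∈ Γ.ball x r) (hw : w ∈ Γ.ball y s) :
    w ∈ Γ.ball x (r + s) := by
  have h : Γ.G.dist x w ≤ Γ.G.dist x y + Γ.G.dist y w := Γ.connected.dist_triangle
  show (Γ.G.dist x w : ℝ) ≤ r + s
  calc (Γ.G.dist x w : ℝ) ≤ Γ.G.dist x y + Γ.G.dist y w := by exact_mod_cast h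
    _ ≤ r + s := add_le_add hy hw

lemma wE_le_wV (x y : V) : Γ.wE x y ≤ Γ.wV x :=
  ((Γ.wE_summable x).le_tsum y fun z _ => Γ.wE_nonneg x z).trans (Γ.subordinate x)

lemma sqnorm_eq_sum (s : Finset V) (hs : ∀ x, f x ≠ 0 → x ∈ s) :
    Γ.sqnorm f = ∑ x ∈ s, f x ^ 2 * Γ.wV x :=
  tsum_eq_sum fun x hx => by rw [not_imp_comm.1 (hs x) hx]; ring

lemma avg_nonneg (hf : ∀ y, 0 ≤ f y) (r : ℝ) (x : V) : 0 ≤ Γ.avg r f x :=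
  div_nonneg (setSum_nonneg fun y => mul_nonneg (hf y) (Γ.wV_pos y).le)
    (setSum_nonneg fun y => (Γ.wV_pos y).le)

lemma exists_ne_zero_of_avg_ne_zero (h : Γ.avg r f x ≠ 0) : ∃ y ∈ Γ.ball x r, f y ≠ 0 := by
  obtain ⟨y, hy, hfy⟩ := exists_ne_zero_of_setSum_ne_zero (div_ne_zero_iff.1 h).1
  exact ⟨y, hy, left_ne_zero_of_mul hfy⟩

lemma mul_wV_le_vol_mul_avg (hball : (Γ.ball x r).Finite) (hf : ∀ y, 0 ≤ f y)
    (hy : y ∈ Γ.ball x r) : f y * Γ.wV y ≤ Γ.vol x r * Γ.avg r f x := by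
  have hvol : 0 < Γ.vol x r :=
    (Γ.wV_pos y).trans_le (le_setSum hball (fun z => (Γ.wV_pos z).le) hy)
  rw [avg, mul_div_cancel₀ _ hvol.ne']
  exact le_setSum hball (fun z => mul_nonneg (hf z) (Γ.wV_pos z).le) hy

namespace Controlled

variable {Cc : ℝ}

lemma pos (hc : Γ.Controlled Cc) : 0 < Cc := one_pos.trans hc.1

lemma wV_le_of_adj (hc : Γ.Controlled Cc) (h : Γ.G.Adj x y) : Γ.wV y ≤ Cc * Γ.wV x :=
  calc Γ.wV y ≤ Cc * Γ.wE y x := hc.2 y x h.symm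
    _ = Cc * Γ.wE x y := by rw [Γ.wE_symm]
    _ ≤ Cc * Γ.wV x := mul_le_mul_of_nonneg_left (wE_le_wV x y) hc.pos.le

lemma finite_neighborSet (hc : Γ.Controlled Cc) (x : V) : (Γ.G.neighborSet x).Finite := by
  have hpos : 0 < Γ.wV x / Cc := div_pos (Γ.wV_pos x) hc.pos
  refine (Filter.eventually_cofinite.1 <|
    (Γ.wE_summable x).tendsto_cofinite_zero.eventually (gt_mem_nhds hpos)).subset fun y hy => ?_
  exact not_lt.2 ((div_le_iff₀ hc.pos).2 (by linarith [hc.2 x y hy]))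

noncomputable def neighborFinset (hc : Γ.Controlled Cc) (x : V) : Finset V :=
  (hc.finite_neighborSet x).toFinset

lemma mem_neighborFinset (hc : Γ.Controlled Cc) : y ∈ hc.neighborFinset x ↔ Γ.G.Adj x y := by
  simp [neighborFinset]

lemma card_neighborFinset_le (hc : Γ.Controlled Cc) (x : V) :
    ((hc.neighborFinset x).card : ℝ) ≤ Cc := by
  have hlow : (hc.neighborFinset x).card • (Γ.wV x / Cc) ≤ ∑ y ∈ hc.neighborFinset x, Γ.wE x y :=
    Finset.card_nsmul_le_sum _ _ _ fun y hy =>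
      (div_le_iff₀ hc.pos).2 (by linarith [hc.2 x y ((mem_neighborFinset hc).1 hy)])
  have hup : ∑ y ∈ hc.neighborFinset x, Γ.wE x y ≤ Γ.wV x :=
    ((Γ.wE_summable x).sum_le_tsum _ fun y _ => Γ.wE_nonneg x y).trans (Γ.subordinate x)
  rw [nsmul_eq_mul] at hlow
  refine le_of_mul_le_mul_right ?_ (Γ.wV_pos x)
  calc ((hc.neighborFinset x).card : ℝ) * Γ.wV x
      = Cc * ((hc.neighborFinset x).card * (Γ.wV x / Cc)) := by field_simp [hc.pos.ne']
    _ ≤ Cc * Γ.wV x := mul_le_mul_of_nonneg_left (hlow.trans hup) hc.pos.le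

open Classical in
noncomputable def stepFinset (hc : Γ.Controlled Cc) (x : V) : ℕ → Finset V
  | 0 => {x}
  | n + 1 => stepFinset hc x n ∪ (stepFinset hc x n).biUnion hc.neighborFinset

lemma stepFinset_mono (hc : Γ.Controlled Cc) (x : V) : Monotone (hc.stepFinset x) := by
  classical
  exact monotone_nat_of_le_succ fun n => by
    simp only [stepFinset]; exact Finset.subset_union_left

lemma mem_stepFinset_of_walk (hc : Γ.Controlled Cc) (p : Γ.G.Walk y x) :
    y ∈ hc.stepFinset x p.length := by
  classical
  induction p with
  | nil => simp [stepFinset]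
  | @cons y w x h q ih =>
    simp only [SimpleGraph.Walk.length_cons, stepFinset]
    exact Finset.mem_union_right _ (Finset.mem_biUnion.2 ⟨w, ih, (mem_neighborFinset hc).2 h.symm⟩)

lemma mem_stepFinset_of_dist_le (hc : Γ.Controlled Cc) {n : ℕ} (h : Γ.G.dist x y ≤ n) :
    y ∈ hc.stepFinset x n := by
  obtain ⟨p, hp⟩ := Γ.connected.exists_walk_length_eq_dist y x
  exact hc.stepFinset_mono x (hp.trans_le (SimpleGraph.dist_comm.trans_le h))
    (hc.mem_stepFinset_of_walk p)

lemma ball_subset_stepFinset (hc : Γ.Controlled Cc) (x : V) (r : ℝ) :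
    Γ.ball x r ⊆ hc.stepFinset x ⌊r⌋₊ :=
  fun _ hy => hc.mem_stepFinset_of_dist_le (Nat.le_floor hy)

lemma finite_ball (hc : Γ.Controlled Cc) (x : V) (r : ℝ) : (Γ.ball x r).Finite :=
  (Finset.finite_toSet _).subset (hc.ball_subset_stepFinset x r)

lemma card_stepFinset_le (hc : Γ.Controlled Cc) (x : V) (n : ℕ) :
    ((hc.stepFinset x n).card : ℝ) ≤ (Cc + 1) ^ n := by
  classical
  induction n with
  | zero => simp [stepFinset]
  | succ n ih =>
    set S := hc.stepFinset x n
    have hunion : ((S ∪ S.biUnion hc.neighborFinset).card : ℝ)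
        ≤ S.card + ∑ z ∈ S, ((hc.neighborFinset z).card : ℝ) := by
      exact_mod_cast (Finset.card_union_le _ _).trans (add_le_add le_rfl Finset.card_biUnion_le)
    calc ((hc.stepFinset x (n + 1)).card : ℝ)
        ≤ S.card + ∑ z ∈ S, ((hc.neighborFinset z).card : ℝ) := by simpa only [stepFinset]
      _ ≤ S.card + ∑ _z ∈ S, Cc := by gcongr with z; exact hc.card_neighborFinset_le z
      _ = S.card * (Cc + 1) := by rw [Finset.sum_const, nsmul_eq_mul]; ring
      _ ≤ (Cc + 1) ^ n * (Cc + 1) := mul_le_mul_of_nonneg_right ih (by linarith [hc.pos])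
      _ = (Cc + 1) ^ (n + 1) := (pow_succ _ _).symm

lemma wV_le_of_mem_stepFinset (hc : Γ.Controlled Cc) {n : ℕ} (hy : y ∈ hc.stepFinset x n) :
    Γ.wV y ≤ Cc ^ n * Γ.wV x := by
  classical
  induction n generalizing y with
  | zero => simp_all [stepFinset]
  | succ n ih =>
    simp only [stepFinset, Finset.mem_union, Finset.mem_biUnion] at hy
    rcases hy with hy | ⟨z, hz, hzy⟩
    · calc Γ.wV y ≤ Cc ^ n * Γ.wV x := ih hy
        _ ≤ Cc ^ (n + 1) * Γ.wV x := by
          gcongr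
          · exact (Γ.wV_pos x).le
          · exact hc.1.le
          · omega
    · calc Γ.wV y ≤ Cc * Γ.wV z := hc.wV_le_of_adj ((mem_neighborFinset hc).1 hzy)
        _ ≤ Cc * (Cc ^ n * Γ.wV x) := mul_le_mul_of_nonneg_left (ih hz) hc.pos.le
        _ = Cc ^ (n + 1) * Γ.wV x := by ring

lemma wV_le_of_mem_ball (hc : Γ.Controlled Cc) (hy : y ∈ Γ.ball x r) :
    Γ.wV y ≤ Cc ^ ⌊r⌋₊ * Γ.wV x :=
  hc.wV_le_of_mem_stepFinset (hc.ball_subset_stepFinset x r hy)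

lemma vol_le (hc : Γ.Controlled Cc) (x : V) (r : ℝ) :
    Γ.vol x r ≤ (Cc + 1) ^ ⌊r⌋₊ * Cc ^ ⌊r⌋₊ * Γ.wV x :=
  calc Γ.vol x r ≤ ∑ y ∈ hc.stepFinset x ⌊r⌋₊, Γ.wV y :=
        setSum_le_sum_of_subset (hc.ball_subset_stepFinset x r) fun y => (Γ.wV_pos y).le
    _ ≤ ∑ _y ∈ hc.stepFinset x ⌊r⌋₊, Cc ^ ⌊r⌋₊ * Γ.wV x :=
        Finset.sum_le_sum fun y hy => hc.wV_le_of_mem_stepFinset hy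
    _ = (hc.stepFinset x ⌊r⌋₊).card * (Cc ^ ⌊r⌋₊ * Γ.wV x) := by
        rw [Finset.sum_const, nsmul_eq_mul]
    _ ≤ (Cc + 1) ^ ⌊r⌋₊ * (Cc ^ ⌊r⌋₊ * Γ.wV x) :=
        mul_le_mul_of_nonneg_right (hc.card_stepFinset_le x _)
          (mul_nonneg (pow_nonneg hc.pos.le _) (Γ.wV_pos x).le)
    _ = (Cc + 1) ^ ⌊r⌋₊ * Cc ^ ⌊r⌋₊ * Γ.wV x := by ring

lemma sq_mul_wV_le_mul_avg_sq (hc : Γ.Controlled Cc) (hf : ∀ y, 0 ≤ f y)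
    (hy : y ∈ Γ.ball x r) :
    f y ^ 2 * Γ.wV y
      ≤ ((Cc + 1) ^ ⌊r⌋₊ * Cc ^ ⌊r⌋₊) ^ 2 * Cc ^ ⌊r⌋₊ * (Γ.avg r f x ^ 2 * Γ.wV x) := by
  set K := (Cc + 1) ^ ⌊r⌋₊ * Cc ^ ⌊r⌋₊
  set A := Γ.avg r f x
  have hA : 0 ≤ A := avg_nonneg hf r x
  have hwx := Γ.wV_pos x
  have hmass : f y * Γ.wV y ≤ K * Γ.wV x * A :=
    (mul_wV_le_vol_mul_avg (hc.finite_ball x r) hf hy).trans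
      (mul_le_mul_of_nonneg_right (hc.vol_le x r) hA)
  have hwx_le : Γ.wV x ≤ Cc ^ ⌊r⌋₊ * Γ.wV y := hc.wV_le_of_mem_ball (mem_ball_comm.1 hy)
  refine le_of_mul_le_mul_right ?_ (Γ.wV_pos y)
  calc f y ^ 2 * Γ.wV y * Γ.wV y = (f y * Γ.wV y) ^ 2 := by ring
    _ ≤ (K * Γ.wV x * A) ^ 2 := pow_le_pow_left₀ (mul_nonneg (hf y) (Γ.wV_pos y).le) hmass 2
    _ = K ^ 2 * A ^ 2 * Γ.wV x * Γ.wV x := by ring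
    _ ≤ K ^ 2 * A ^ 2 * Γ.wV x * (Cc ^ ⌊r⌋₊ * Γ.wV y) :=
        mul_le_mul_of_nonneg_left hwx_le (by positivity)
    _ = K ^ 2 * Cc ^ ⌊r⌋₊ * (A ^ 2 * Γ.wV x) * Γ.wV y := by ring

end Controlled

section QuasiIsometry

variable {V₁ V₂ : Type*} {Γ₁ : WeightedGraph V₁} {Γ₂ : WeightedGraph V₂} {Φ : V₁ → V₂}
  {ε a b Cq : ℝ}

lemma IsQI.mem_ball_of_map_mem_ball (hΦ : IsQI Γ₁ Γ₂ Φ ε a b Cq) {x y : V₁} {s : ℝ}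
    (h : Φ y ∈ Γ₂.ball (Φ x) s) : y ∈ Γ₁.ball x (a * (s + b)) :=
  (inv_mul_le_iff₀ hΦ.a_pos).1 (by linarith [hΦ.dist_lower x y, show _ ≤ s from h])

lemma IsQI.mem_ball_of_avg_comp_ne_zero (hΦ : IsQI Γ₁ Γ₂ Φ ε a b Cq) {f : V₂ → ℝ} {z : V₂}
    {r : ℝ} (hsupp : ∀ x, f x ≠ 0 → x ∈ Γ₂.ball z r) {β₀ β : V₁}
    (hz : z ∈ Γ₂.ball (Φ β₀) ε) (hβ : Γ₂.avg ε f (Φ β) ≠ 0) :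
    β ∈ Γ₁.ball β₀ (a * (ε + (r + ε) + b)) := by
  obtain ⟨x, hx, hfx⟩ := exists_ne_zero_of_avg_ne_zero hβ
  exact hΦ.mem_ball_of_map_mem_ball
    (mem_ball_add hz (mem_ball_add (hsupp x hfx) (mem_ball_comm.1 hx)))

lemma IsQI.summable_sq_avg_comp_mul_wV {Cc₁ : ℝ} (hΦ : IsQI Γ₁ Γ₂ Φ ε a b Cq)
    (h₁c : Γ₁.Controlled Cc₁) {f : V₂ → ℝ} {z : V₂} {r : ℝ}
    (hsupp : ∀ x, f x ≠ 0 → x ∈ Γ₂.ball z r) :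
    Summable fun β => Γ₂.avg ε f (Φ β) ^ 2 * Γ₁.wV β := by
  obtain ⟨β₀, hβ₀⟩ := hΦ.dense z
  refine summable_of_hasFiniteSupport <|
    (h₁c.finite_ball β₀ (a * (ε + (r + ε) + b))).subset fun β hβ => ?_
  exact hΦ.mem_ball_of_avg_comp_ne_zero hsupp hβ₀
    ((pow_ne_zero_iff two_ne_zero).1 (left_ne_zero_of_mul hβ))

lemma IsQI.sq_mul_wV_le_mul_avg_comp_sq {Cc₂ : ℝ} (hΦ : IsQI Γ₁ Γ₂ Φ ε a b Cq)
    (h₂c : Γ₂.Controlled Cc₂) {f : V₂ → ℝ} (hf : ∀ x, 0 ≤ f x) {x : V₂} {β : V₁}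
    (hx : x ∈ Γ₂.ball (Φ β) ε) :
    f x ^ 2 * Γ₂.wV x ≤ Cq * (((Cc₂ + 1) ^ ⌊ε⌋₊ * Cc₂ ^ ⌊ε⌋₊) ^ 2 * Cc₂ ^ ⌊ε⌋₊) *
      (Γ₂.avg ε f (Φ β) ^ 2 * Γ₁.wV β) := by
  have hCc := h₂c.pos
  calc f x ^ 2 * Γ₂.wV x
      ≤ ((Cc₂ + 1) ^ ⌊ε⌋₊ * Cc₂ ^ ⌊ε⌋₊) ^ 2 * Cc₂ ^ ⌊ε⌋₊ *
          (Γ₂.avg ε f (Φ β) ^ 2 * Γ₂.wV (Φ β)) := h₂c.sq_mul_wV_le_mul_avg_sq hf hx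
    _ ≤ ((Cc₂ + 1) ^ ⌊ε⌋₊ * Cc₂ ^ ⌊ε⌋₊) ^ 2 * Cc₂ ^ ⌊ε⌋₊ *
          (Γ₂.avg ε f (Φ β) ^ 2 * (Cq * Γ₁.wV β)) := by
        gcongr; exact hΦ.weight_upper β
    _ = _ := by ring

end QuasiIsometry

end WeightedGraph

open WeightedGraph in
theorem l2_lower_bound_averaged_pullback_general {V₁ V₂ : Type*}
    (Γ₁ : WeightedGraph V₁) (Γ₂ : WeightedGraph V₂)
    (Cc₁ Cc₂ : ℝ)
    (h₁c : Γ₁.Controlled Cc₁)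
    (h₂c : Γ₂.Controlled Cc₂)
    (Φ : V₁ → V₂) (ε a b Cq : ℝ) (hΦ : IsQI Γ₁ Γ₂ Φ ε a b Cq) :
    ∃ CB : ℝ, 0 < CB ∧
      ∀ z : V₂, ∀ r : ℝ, 1 ≤ r → ∀ f : V₂ → ℝ, (∀ x, 0 ≤ f x) →
        (∀ x : V₂, f x ≠ 0 → x ∈ Γ₂.ball z r) →
        CB * Γ₂.sqnorm f ≤ Γ₁.sqnorm (fun x => Γ₂.avg ε f (Φ x)) := by
  classical
  have hCc := h₂c.pos
  have hCq := hΦ.Cq_pos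
  set N : ℝ := (Cc₂ + 1) ^ ⌊ε⌋₊
  set K : ℝ := Cq * ((N * Cc₂ ^ ⌊ε⌋₊) ^ 2 * Cc₂ ^ ⌊ε⌋₊)
  refine ⟨(K * N)⁻¹, by positivity, fun z r _ f hf hsupp => ?_⟩
  choose α hα using hΦ.dense
  set g : V₁ → ℝ := fun β => Γ₂.avg ε f (Φ β) ^ 2 * Γ₁.wV β
  set B := (h₂c.finite_ball z r).toFinset
  have hfiber : ∀ β, (({x ∈ B | α x = β} : Finset V₂).card : ℝ) ≤ N := fun β =>
    le_trans (Nat.cast_le.2 <| Finset.card_le_card fun x hx =>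
        h₂c.ball_subset_stepFinset (Φ β) ε ((Finset.mem_filter.1 hx).2 ▸ hα x))
      (h₂c.card_stepFinset_le _ _)
  rw [inv_mul_le_iff₀ (by positivity),
    sqnorm_eq_sum B fun x hx => (h₂c.finite_ball z r).mem_toFinset.2 (hsupp x hx)]
  calc ∑ x ∈ B, f x ^ 2 * Γ₂.wV x ≤ ∑ x ∈ B, K * g (α x) :=
        Finset.sum_le_sum fun x _ => hΦ.sq_mul_wV_le_mul_avg_comp_sq h₂c hf (hα x)
    _ = K * ∑ x ∈ B, g (α x) := (Finset.mul_sum _ _ _).symm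
    _ ≤ K * (N * ∑' β, g β) := by
        refine mul_le_mul_of_nonneg_left (sum_comp_le_mul_tsum B α (fun β => ?_)
          (hΦ.summable_sq_avg_comp_mul_wV h₁c hsupp) (by positivity) hfiber) (by positivity)
        exact mul_nonneg (sq_nonneg _) (Γ₁.wV_pos β).le
    _ = K * N * ∑' β, g β := by ring

open WeightedGraph in
/-- **Claim (L² lower bound for the averaged pullback under a quasi-isometry).**
Let `Φ : Γ₁ → Γ₂` be a quasi-isometry between connected weighted graphs with controlled
and uniformly lazy weights.  Then there is a constant `C_B > 0` such that for every
`z ∈ Γ₂`, every `r ≥ 1`, and every non-negative `f : Γ₂ → ℝ` supported in `B₂(z,r)`: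
`‖f_ε ∘ Φ‖²_{L²(Γ₁)} ≥ C_B ‖f‖²_{L²(Γ₂)}`. -/
theorem l2_lower_bound_averaged_pullback {V₁ V₂ : Type*}
    (Γ₁ : WeightedGraph V₁) (Γ₂ : WeightedGraph V₂)
    (Cc₁ Ce₁ Cc₂ Ce₂ : ℝ)
    (h₁c : Γ₁.Controlled Cc₁) (h₁e : Γ₁.UniformlyLazy Ce₁)
    (h₂c : Γ₂.Controlled Cc₂) (h₂e : Γ₂.UniformlyLazy Ce₂)
    (Φ : V₁ → V₂) (ε a b Cq : ℝ) (hΦ : IsQI Γ₁ Γ₂ Φ ε a b Cq) :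
    ∃ CB : ℝ, 0 < CB ∧
      ∀ z : V₂, ∀ r : ℝ, 1 ≤ r → ∀ f : V₂ → ℝ, (∀ x, 0 ≤ f x) →
        (∀ x : V₂, f x ≠ 0 → x ∈ Γ₂.ball z r) →
        CB * Γ₂.sqnorm f ≤ Γ₁.sqnorm (fun x => Γ₂.avg ε f (Φ x)) :=
  l2_lower_bound_averaged_pullback_general Γ₁ Γ₂ Cc₁ Cc₂ h₁c h₂c Φ ε a b Cq hΦ
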